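/- Let G be a finite group, A a commutative unital ring, and T ⊆ G a set containing exactly one representative from each conjugacy class of G. For g ∈ G let ad_g denote the inner derivation x ↦ ĝx − xĝ of A[G]. Then the family (ad_g)_{g ∈ G \ T} is a basis of the A-module Inn(A[G]) of inner derivations; in particular Inn(A[G]) is a free A-module. -/

import Mathlib

open MonoidAlgebra

/-- The A-submodule of inner derivations of the group ring `A[G]`, inside the
`A`-module of all `A`-linear endomorphisms of `A[G]`. -/
def innDer (A G : Type) [CommRing A] [Group G] :
    Submodule A (MonoidAlgebra A G →ₗ[A] MonoidAlgebra A G) where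
  carrier := {d | ∃ a : MonoidAlgebra A G, ∀ x : MonoidAlgebra A G, d x = a * x - x * a}
  add_mem' := by
    rintro d e ⟨a, ha⟩ ⟨b, hb⟩
    refine ⟨a + b, fun x => ?_⟩
    simp only [LinearMap.add_apply, ha x, hb x, add_mul, mul_add]
    abel
  zero_mem' := ⟨0, fun x => by simp⟩
  smul_mem' := by
    rintro c d ⟨a, ha⟩
    refine ⟨c • a, fun x => ?_⟩
    simp only [LinearMap.smul_apply, ha x, smul_sub, smul_mul_assoc, mul_smul_comm]

/-! The kernel of `ad : A[G] → End(A[G])` is the centre, i.e. the class functions. Since `T`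
meets every conjugacy class exactly once, every element of `A[G]` differs from exactly one class
function by an element vanishing on `T`: the span of `{ĝ | g ∉ T}` is a complement of the
kernel, so `ad` maps this basis of the complement to a basis of its image `Inn(A[G])`. -/

theorem LinearMap.exists_basis_range_of_isCompl_span_ker {ι R M N : Type*} [Ring R]
    [AddCommGroup M] [Module R M] [AddCommGroup N] [Module R N] (f : M →ₗ[R] N) {v : ι → M}
    (hv : LinearIndependent R v)
    (hcompl : IsCompl (Submodule.span R (Set.range v)) (LinearMap.ker f)) :
    ∃ b : Module.Basis ι R (LinearMap.range f), ∀ i, (b i : N) = f (v i) := by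
  have hspan : Submodule.span R (Set.range (f ∘ v)) = LinearMap.range f := by
    rw [Set.range_comp, ← Submodule.map_span, Submodule.map_eq_range_iff]
    exact hcompl.codisjoint
  exact ⟨(Module.Basis.span (hv.map hcompl.disjoint)).map (LinearEquiv.ofEq _ _ hspan),
    fun i => by simp⟩

namespace MonoidAlgebra

theorem span_range_single_subtype {R M : Type*} [Semiring R] (p : M → Prop) :
    Submodule.span R (Set.range fun m : {m // p m} => single m.1 (1 : R)) =
      supported R R {m | p m} := by
  rw [supported_eq_span_single, ← Subtype.range_coe_subtype, ← Set.range_comp]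
  rfl

variable {A G : Type} [CommRing A]

variable (A G) in
noncomputable def ad [Monoid G] : A[G] →ₗ[A] Module.End A A[G] :=
  LinearMap.mul A A[G] - (LinearMap.mul A A[G]).flip

@[simp]
theorem ad_apply [Monoid G] (a x : A[G]) : ad A G a x = a * x - x * a := rfl

variable [Group G]

theorem innDer_eq_range_ad : innDer A G = LinearMap.range (ad A G) := by
  ext d
  refine ⟨fun ⟨a, ha⟩ => ⟨a, LinearMap.ext fun x => (ha x).symm⟩, ?_⟩
  rintro ⟨a, rfl⟩
  exact ⟨a, ad_apply a⟩

theorem forall_mul_comm_iff_coeff_conj {a : A[G]} :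
    (∀ x, a * x = x * a) ↔ ∀ g h : G, a.coeff (h * g * h⁻¹) = a.coeff g := by
  constructor
  · intro ha g h
    have := congrArg (fun y : A[G] => y.coeff (h * g)) (ha (single h 1))
    simpa [coeff_mul_single_apply, coeff_single_mul_apply, mul_assoc] using this
  · intro ha
    suffices LinearMap.mulLeft A a = LinearMap.mulRight A a from fun x => congr($this x)
    refine lhom_ext' fun h => LinearMap.ext fun r => MonoidAlgebra.ext (Finsupp.ext fun g => ?_)
    have hconj : a.coeff (g * h⁻¹) = a.coeff (h⁻¹ * g) := by
      simpa [mul_assoc] using (ha (g * h⁻¹) h⁻¹).symm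
    simp only [LinearMap.comp_apply, lsingle_apply, LinearMap.mulLeft_apply,
      LinearMap.mulRight_apply, coeff_mul_single_apply, coeff_single_mul_apply, hconj, mul_comm]

theorem mem_ker_ad_iff {a : A[G]} :
    a ∈ LinearMap.ker (ad A G) ↔ ∀ g h : G, a.coeff (h * g * h⁻¹) = a.coeff g := by
  rw [← forall_mul_comm_iff_coeff_conj, LinearMap.mem_ker, LinearMap.ext_iff]
  simp [sub_eq_zero]

variable {T : Set G}

theorem disjoint_supported_compl_ker_ad (hT : ∀ g : G, ∃ t ∈ T, IsConj g t) :
    Disjoint (supported A A Tᶜ) (LinearMap.ker (ad A G)) := by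
  refine Submodule.disjoint_def.mpr fun a ha hker => MonoidAlgebra.ext (Finsupp.ext fun g => ?_)
  obtain ⟨t, htT, hgt⟩ := hT g
  obtain ⟨h, rfl⟩ := isConj_iff.mp hgt
  rw [← mem_ker_ad_iff.mp hker g h]
  exact mem_supported'.mp ha _ (not_not.mpr htT)

theorem codisjoint_supported_compl_ker_ad [Finite G] (hT : ∀ g : G, ∃! t, t ∈ T ∧ IsConj g t) :
    Codisjoint (supported A A Tᶜ) (LinearMap.ker (ad A G)) := by
  choose r hrT hr using fun g => (hT g).exists
  have hr_self : ∀ t ∈ T, r t = t := fun t ht => (hT t).unique ⟨hrT t, hr t⟩ ⟨ht, .refl t⟩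
  have hr_conj : ∀ g h : G, r (h * g * h⁻¹) = r g := fun g h =>
    (hT _).unique ⟨hrT _, hr _⟩ ⟨hrT g, (isConj_iff.mpr ⟨h⁻¹, by group⟩).trans (hr g)⟩
  refine Submodule.codisjoint_iff_exists_add_eq.mpr fun a => ?_
  -- the class function that agrees with `a` on `T`
  let z : A[G] := ofCoeff (Finsupp.equivFunOnFinite.symm fun g => a.coeff (r g))
  refine ⟨a - z, z, mem_supported'.mpr fun t ht => ?_, mem_ker_ad_iff.mpr fun g h => ?_,
    sub_add_cancel a z⟩
  · simp [z, hr_self t (not_not.mp ht)]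
  · simp [z, hr_conj]

end MonoidAlgebra

/-- **Basis of the module of inner derivations.**
If `T ⊆ G` contains exactly one representative of each conjugacy class of the finite
group `G`, then the adjoint derivations `ad_g = (x ↦ ĝx − xĝ)` for `g ∈ G \ T` form a
basis of the `A`-module of inner derivations of `A[G]`; in particular this module is
free. -/
theorem innDer_basis
    (A G : Type) [CommRing A] [Group G] [Finite G]
    (T : Set G) (hT : ∀ g : G, ∃! t, t ∈ T ∧ IsConj g t) :
    (∃ b : Module.Basis {g : G // g ∉ T} A ↥(innDer A G),
      ∀ g : {g : G // g ∉ T},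
        (b g : MonoidAlgebra A G →ₗ[A] MonoidAlgebra A G) =
          LinearMap.mulLeft A (MonoidAlgebra.of A G g.1) -
            LinearMap.mulRight A (MonoidAlgebra.of A G g.1)) ∧
      Module.Free A ↥(innDer A G) := by
  let v : {g : G // g ∉ T} → A[G] := fun g => single g.1 1
  have hv : LinearIndependent A v :=
    (MonoidAlgebra.basis G A).linearIndependent.comp _ Subtype.val_injective
  have hcompl : IsCompl (Submodule.span A (Set.range v)) (LinearMap.ker (ad A G)) := by
    rw [span_range_single_subtype]
    exact ⟨disjoint_supported_compl_ker_ad fun g => (hT g).exists,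
      codisjoint_supported_compl_ker_ad hT⟩
  obtain ⟨b, hb⟩ := LinearMap.exists_basis_range_of_isCompl_span_ker (ad A G) hv hcompl
  rw [innDer_eq_range_ad]
  exact ⟨⟨b, fun g => hb g⟩, .of_basis b⟩
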